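/- Let d ≥ 5, let δ be an integer with 1 ≤ δ ≤ d − δ, and set m = d − δ. Let Z = (z_{ij})_{1≤i≤δ, 1≤j≤m} be a matrix of indeterminates. Then the quotient ring A = O[z_{ij}] / (I₂(Z) + (T'(Z) + 4π)) is an integral domain. -/

import Mathlib

open MvPolynomial

noncomputable section

/-- The ideal `I₂(Z)` of `O[z_{ij}]` generated by all `2 × 2` minors
`z_{ij} z_{i'j'} - z_{ij'} z_{i'j}` of the `δ × m` matrix of indeterminates `Z`. -/
def minors2 (O : Type*) [CommRing O] (δ m : ℕ) : Ideal (MvPolynomial (Fin δ × Fin m) O) :=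
  Ideal.span {f | ∃ (i i' : Fin δ) (j j' : Fin m),
    f = X (i, j) * X (i', j') - X (i, j') * X (i', j)}

/-- The quadratic polynomial `T'(Z) = Σ_{i=1}^{δ} Σ_{j=1}^{m} z_{i,m+1-j} z_{δ+1-i,j}`
(written with 0-indexing via `Fin.rev`). -/
def Tpoly (O : Type*) [CommRing O] (δ m : ℕ) : MvPolynomial (Fin δ × Fin m) O :=
  ∑ i : Fin δ, ∑ j : Fin m, X (i, j.rev) * X (i.rev, j)

namespace Stmt3

open Sum

variable (O : Type*) [CommRing O] (δ m : ℕ)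

/-- The Segre map. -/
def phi : MvPolynomial (Fin δ × Fin m) O →ₐ[O] MvPolynomial (Fin δ ⊕ Fin m) O :=
  aeval fun p => X (inl p.1) * X (inr p.2)

variable {O δ m}

lemma prod_multiset_X {ν : Type*} [DecidableEq ν] (s : Multiset ν) :
    (s.map (X : ν → MvPolynomial ν O)).prod = monomial s.toFinsupp 1 := by
  induction s using Multiset.induction with
  | empty => simp [monomial_eq]
  | cons a s ih =>
      rw [Multiset.map_cons, Multiset.prod_cons, ih, ← Multiset.singleton_add,
        Multiset.toFinsupp_add, Multiset.toFinsupp_singleton, X, monomial_mul, one_mul]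

lemma toFinsupp_replicate {ν : Type*} [DecidableEq ν] (v : ν) (n : ℕ) :
    (Multiset.replicate n v).toFinsupp = Finsupp.single v n := by
  ext a
  simp [Multiset.toFinsupp_apply, Multiset.count_replicate, Finsupp.single_apply, eq_comm]

/-- exponent of the image of a monomial under the Segre map -/
def Ee (c : (Fin δ × Fin m) →₀ ℕ) : (Fin δ ⊕ Fin m) →₀ ℕ :=
  (c.toMultiset.map (fun p => (inl p.1 : Fin δ ⊕ Fin m))
    + c.toMultiset.map (fun p => (inr p.2 : Fin δ ⊕ Fin m))).toFinsupp

lemma Ee_zero : Ee (0 : (Fin δ × Fin m) →₀ ℕ) = 0 := by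
  simp [Ee]

lemma Ee_add (c c' : (Fin δ × Fin m) →₀ ℕ) : Ee (c + c') = Ee c + Ee c' := by
  simp only [Ee, Finsupp.toMultiset_add, Multiset.map_add, Multiset.toFinsupp_add]
  abel

lemma Ee_single (p : Fin δ × Fin m) (n : ℕ) :
    Ee (Finsupp.single p n)
      = Finsupp.single (inl p.1) n + Finsupp.single (inr p.2) n := by
  simp [Ee, Finsupp.toMultiset_single, Multiset.nsmul_singleton, toFinsupp_replicate]

lemma phi_monomial (c : (Fin δ × Fin m) →₀ ℕ) (k : O) :
    phi O δ m (monomial c k) = monomial (Ee c) k := by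
  induction c using Finsupp.induction with
  | zero =>
      rw [monomial_zero', Ee_zero, monomial_zero']
      simp [phi]
  | single_add p n c hp hn ih =>
      have h1 : monomial (Finsupp.single p n + c) k
          = monomial (Finsupp.single p n) (1 : O) * monomial c k := by
        rw [monomial_mul, one_mul]
      rw [h1, map_mul, ih, ← X_pow_eq_monomial]
      have h2 : phi O δ m ((X p : MvPolynomial (Fin δ × Fin m) O) ^ n)
          = monomial (Finsupp.single (inl p.1) n + Finsupp.single (inr p.2) n) 1 := by
        rw [map_pow]
        show ((aeval fun p : Fin δ × Fin m =>
          (X (inl p.1) * X (inr p.2) : MvPolynomial (Fin δ ⊕ Fin m) O)) (X p)) ^ n = _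
        rw [aeval_X, mul_pow, X_pow_eq_monomial, X_pow_eq_monomial, monomial_mul, one_mul]
      rw [h2, monomial_mul, one_mul, Ee_add, Ee_single]

variable (O) in
/-- product of variables paired from two lists -/
def Pl (l : List (Fin δ)) (r : List (Fin m)) : MvPolynomial (Fin δ × Fin m) O :=
  ((l.zip r).map X).prod

lemma Pl_nil_left (r : List (Fin m)) : Pl O ([] : List (Fin δ)) r = 1 := by simp [Pl]

lemma Pl_nil_right (l : List (Fin δ)) : Pl O l ([] : List (Fin m)) = 1 := by simp [Pl]

lemma Pl_cons (a : Fin δ) (l : List (Fin δ)) (x : Fin m) (r : List (Fin m)) :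
    Pl O (a :: l) (x :: r) = X (a, x) * Pl O l r := by
  simp [Pl]

lemma Pl_eq_monomial (l : List (Fin δ)) (r : List (Fin m)) :
    Pl O l r = monomial (Multiset.toFinsupp (↑(l.zip r))) (1 : O) := by
  rw [Pl, ← prod_multiset_X (↑(l.zip r) : Multiset (Fin δ × Fin m))]
  rw [Multiset.map_coe, Multiset.prod_coe]

lemma swap_mem (a b : Fin δ) (x y : Fin m) :
    (X (a, x) * X (b, y) - X (a, y) * X (b, x) : MvPolynomial (Fin δ × Fin m) O)
      ∈ minors2 O δ m :=
  Ideal.subset_span ⟨a, b, x, y, rfl⟩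

lemma mk_swap (a b : Fin δ) (x y : Fin m) :
    Ideal.Quotient.mk (minors2 O δ m) (X (a, x) * X (b, y))
      = Ideal.Quotient.mk (minors2 O δ m) (X (a, y) * X (b, x)) :=
  Ideal.Quotient.eq.2 (swap_mem a b x y)

lemma mk_Pl_perm_r {r r' : List (Fin m)} (h : r.Perm r') :
    ∀ l : List (Fin δ), r.length ≤ l.length →
      Ideal.Quotient.mk (minors2 O δ m) (Pl O l r)
        = Ideal.Quotient.mk (minors2 O δ m) (Pl O l r') := by
  induction h with
  | nil => intro l _; rfl
  | cons x _ ih =>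
      intro l hl
      match l with
      | a :: l =>
          rw [Pl_cons, Pl_cons, map_mul, map_mul, ih l (by simpa using hl)]
  | swap x y r =>
      intro l hl
      match l with
      | a :: b :: l =>
          have e1 : Pl O (a :: b :: l) (y :: x :: r)
              = X (a, y) * X (b, x) * Pl O l r := by
            rw [Pl_cons, Pl_cons, mul_assoc]
          have e2 : Pl O (a :: b :: l) (x :: y :: r)
              = X (a, x) * X (b, y) * Pl O l r := by
            rw [Pl_cons, Pl_cons, mul_assoc]
          rw [e1, e2]
          refine Ideal.Quotient.eq.2 ?_
          have hd : X (a, y) * X (b, x) * Pl O l r - X (a, x) * X (b, y) * Pl O l r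
              = (X (a, y) * X (b, x) - X (a, x) * X (b, y)) * Pl O l r := by ring
          rw [hd]
          exact Ideal.mul_mem_right _ _ (swap_mem a b y x)
  | trans h₁ h₂ ih₁ ih₂ =>
      intro l hl
      rw [ih₁ l hl, ih₂ l (by rwa [← h₁.length_eq])]

lemma Pl_perm_l {l l' : List (Fin δ)} (h : l.Perm l') :
    ∀ r : List (Fin m), r.length = l.length →
      ∃ r'' : List (Fin m), r''.Perm r ∧ Pl O l r = Pl O l' r'' := by
  induction h with
  | nil =>
      intro r hr
      exact ⟨r, List.Perm.refl r, rfl⟩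
  | @cons a l₁ l₂ _ ih =>
      intro r hr
      match r with
      | x :: rt =>
          obtain ⟨rt'', hperm, heq⟩ := ih rt (by simpa using hr)
          exact ⟨x :: rt'', hperm.cons x, by rw [Pl_cons, Pl_cons, heq]⟩
  | @swap a b l₀ =>
      intro r hr
      match r with
      | c :: d :: r₀ =>
          refine ⟨d :: c :: r₀, List.Perm.swap c d r₀, ?_⟩
          rw [Pl_cons, Pl_cons, Pl_cons, Pl_cons]
          ring
  | @trans l₁ l₂ l₃ h₁ h₂ ih₁ ih₂ =>
      intro r hr
      obtain ⟨r'', hperm, heq⟩ := ih₁ r hr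
      obtain ⟨r''', hperm', heq'⟩ := ih₂ r'' (by rw [hperm.length_eq, hr, h₁.length_eq])
      exact ⟨r''', hperm'.trans hperm, heq.trans heq'⟩

lemma mk_Pl_congr {l l' : List (Fin δ)} {r r' : List (Fin m)}
    (hl : l.Perm l') (hr : r.Perm r') (hlen : r.length = l.length) :
    Ideal.Quotient.mk (minors2 O δ m) (Pl O l r)
      = Ideal.Quotient.mk (minors2 O δ m) (Pl O l' r') := by
  obtain ⟨r'', hperm, heq⟩ := Pl_perm_l (O := O) hl r hlen
  rw [heq]
  exact mk_Pl_perm_r (hperm.trans hr) l'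
    (by rw [hperm.length_eq, hlen, hl.length_eq])


/-! ### Extraction of a canonical preimage -/

def lef (e : (Fin δ ⊕ Fin m) →₀ ℕ) : List (Fin δ) :=
  e.toMultiset.toList.filterMap Sum.getLeft?

def rig (e : (Fin δ ⊕ Fin m) →₀ ℕ) : List (Fin m) :=
  e.toMultiset.toList.filterMap Sum.getRight?

variable (O) in
def Mpre (e : (Fin δ ⊕ Fin m) →₀ ℕ) : MvPolynomial (Fin δ × Fin m) O :=
  Pl O (lef e) (rig e)

lemma split_perm (L : List (Fin δ ⊕ Fin m)) :
    ((L.filterMap Sum.getLeft?).map inl ++ (L.filterMap Sum.getRight?).map inr).Perm L := by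
  induction L with
  | nil => simp
  | cons v L ih =>
      cases v with
      | inl a =>
          have h1 : Sum.getLeft? (inl a : Fin δ ⊕ Fin m) = some a := rfl
          have h2 : Sum.getRight? (inl a : Fin δ ⊕ Fin m) = none := rfl
          simp only [List.filterMap_cons, h1, h2, List.map_cons, List.cons_append]
          exact ih.cons (inl a)
      | inr b =>
          have h1 : Sum.getLeft? (inr b : Fin δ ⊕ Fin m) = none := rfl
          have h2 : Sum.getRight? (inr b : Fin δ ⊕ Fin m) = some b := rfl
          simp only [List.filterMap_cons, h1, h2, List.map_cons]
          exact List.perm_middle.trans (ih.cons (inr b))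

lemma coe_lef (e : (Fin δ ⊕ Fin m) →₀ ℕ) :
    (↑(lef e) : Multiset (Fin δ)) = e.toMultiset.filterMap Sum.getLeft? := by
  rw [lef, ← Multiset.filterMap_coe, Multiset.coe_toList]

lemma coe_rig (e : (Fin δ ⊕ Fin m) →₀ ℕ) :
    (↑(rig e) : Multiset (Fin m)) = e.toMultiset.filterMap Sum.getRight? := by
  rw [rig, ← Multiset.filterMap_coe, Multiset.coe_toList]

lemma toMultiset_Ee (c : (Fin δ × Fin m) →₀ ℕ) :
    (Ee c).toMultiset
      = c.toMultiset.map (fun p => (inl p.1 : Fin δ ⊕ Fin m))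
        + c.toMultiset.map (fun p => (inr p.2 : Fin δ ⊕ Fin m)) :=
  Multiset.toFinsupp_toMultiset _

lemma filterMap_add' {α β : Type*} (f : α → Option β) (s t : Multiset α) :
    (s + t).filterMap f = s.filterMap f + t.filterMap f := by
  induction s using Multiset.induction with
  | empty => simp
  | cons a s ih =>
      rw [Multiset.cons_add]
      cases h : f a with
      | none => rw [Multiset.filterMap_cons_none _ _ h, Multiset.filterMap_cons_none _ _ h, ih]
      | some b =>
          rw [Multiset.filterMap_cons_some _ _ _ h, Multiset.filterMap_cons_some _ _ _ h,
            Multiset.cons_add, ih]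

lemma coe_lef_Ee (c : (Fin δ × Fin m) →₀ ℕ) :
    (↑(lef (Ee c)) : Multiset (Fin δ)) = c.toMultiset.map Prod.fst := by
  rw [coe_lef, toMultiset_Ee, filterMap_add', Multiset.filterMap_map,
    Multiset.filterMap_map]
  have h1 : (Sum.getLeft? ∘ fun p : Fin δ × Fin m => (inl p.1 : Fin δ ⊕ Fin m))
      = some ∘ Prod.fst := rfl
  have h2 : (Sum.getLeft? ∘ fun p : Fin δ × Fin m => (inr p.2 : Fin δ ⊕ Fin m))
      = fun _ => (none : Option (Fin δ)) := rfl
  rw [h1, h2, Multiset.filterMap_eq_map]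
  have h3 : ∀ M : Multiset (Fin δ × Fin m),
      M.filterMap (fun _ => (none : Option (Fin δ))) = 0 := by
    intro M
    induction M using Multiset.induction with
    | empty => simp
    | cons a M ih => rw [Multiset.filterMap_cons_none _ _ rfl]; exact ih
  rw [h3, add_zero]

lemma coe_rig_Ee (c : (Fin δ × Fin m) →₀ ℕ) :
    (↑(rig (Ee c)) : Multiset (Fin m)) = c.toMultiset.map Prod.snd := by
  rw [coe_rig, toMultiset_Ee, filterMap_add', Multiset.filterMap_map,
    Multiset.filterMap_map]
  have h1 : (Sum.getRight? ∘ fun p : Fin δ × Fin m => (inr p.2 : Fin δ ⊕ Fin m))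
      = some ∘ Prod.snd := rfl
  have h2 : (Sum.getRight? ∘ fun p : Fin δ × Fin m => (inl p.1 : Fin δ ⊕ Fin m))
      = fun _ => (none : Option (Fin m)) := rfl
  rw [h1, h2, Multiset.filterMap_eq_map]
  have h3 : ∀ M : Multiset (Fin δ × Fin m),
      M.filterMap (fun _ => (none : Option (Fin m))) = 0 := by
    intro M
    induction M using Multiset.induction with
    | empty => simp
    | cons a M ih => rw [Multiset.filterMap_cons_none _ _ rfl]; exact ih
  rw [h3, zero_add]

/-- Heart lemma: every monomial is congruent mod `minors2` to the canonical preimage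
monomial of its Segre image. -/
lemma mk_monomial_eq (c : (Fin δ × Fin m) →₀ ℕ) :
    Ideal.Quotient.mk (minors2 O δ m) (monomial c (1 : O))
      = Ideal.Quotient.mk (minors2 O δ m) (Mpre O (Ee c)) := by
  classical
  set L : List (Fin δ × Fin m) := c.toMultiset.toList with hL
  have hzip : (L.map Prod.fst).zip (L.map Prod.snd) = L := by
    rw [List.zip_map']
    simp
  have h1 : monomial c (1 : O) = Pl O (L.map Prod.fst) (L.map Prod.snd) := by
    rw [Pl_eq_monomial, hzip, hL, Multiset.coe_toList, Finsupp.toMultiset_toFinsupp]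
  have hcl : (↑(L.map Prod.fst) : Multiset (Fin δ)) = ↑(lef (Ee c)) := by
    rw [coe_lef_Ee, ← Multiset.map_coe, hL, Multiset.coe_toList]
  have hcr : (↑(L.map Prod.snd) : Multiset (Fin m)) = ↑(rig (Ee c)) := by
    rw [coe_rig_Ee, ← Multiset.map_coe, hL, Multiset.coe_toList]
  rw [h1, Mpre]
  exact mk_Pl_congr (Multiset.coe_eq_coe.1 hcl) (Multiset.coe_eq_coe.1 hcr)
    (by simp)

/-! ### The linear section and the kernel bound -/

variable (O δ m) in
def toQ : MvPolynomial (Fin δ ⊕ Fin m) O →ₗ[O]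
    (MvPolynomial (Fin δ × Fin m) O ⧸ minors2 O δ m) :=
  (Finsupp.lsum O fun e =>
    LinearMap.toSpanSingleton O _ (Ideal.Quotient.mk (minors2 O δ m) (Mpre O e))) ∘ₗ
    (AddMonoidAlgebra.coeffLinearEquiv O).toLinearMap

lemma toQ_monomial (e : (Fin δ ⊕ Fin m) →₀ ℕ) (k : O) :
    toQ O δ m (monomial e k) = k • Ideal.Quotient.mk (minors2 O δ m) (Mpre O e) := by
  rw [← single_eq_monomial]
  exact Finsupp.lsum_single O _ e k

lemma mk_eq_toQ_phi (F : MvPolynomial (Fin δ × Fin m) O) :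
    Ideal.Quotient.mk (minors2 O δ m) F = toQ O δ m (phi O δ m F) := by
  induction F using MvPolynomial.induction_on' with
  | monomial c k =>
      rw [phi_monomial, toQ_monomial]
      have h1 : monomial c k = k • monomial c (1 : O) := by
        rw [smul_eq_C_mul, C_mul_monomial, mul_one]
      rw [h1, ← Ideal.Quotient.mkₐ_eq_mk O, map_smul, Ideal.Quotient.mkₐ_eq_mk O,
        mk_monomial_eq]
  | add p q hp hq => rw [map_add, map_add, map_add, hp, hq]

lemma mem_minors_of_phi_eq_zero {F : MvPolynomial (Fin δ × Fin m) O}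
    (h : phi O δ m F = 0) : F ∈ minors2 O δ m := by
  have := mk_eq_toQ_phi F
  rw [h, map_zero] at this
  rwa [← Ideal.Quotient.eq_zero_iff_mem]

/-! ### Weights -/

variable (δ m) in
def wS : Fin δ ⊕ Fin m → ℤ := Sum.elim (fun _ => (1 : ℤ)) (fun _ => -1)

lemma weight_toMultiset (e : (Fin δ ⊕ Fin m) →₀ ℕ) :
    Finsupp.weight (wS δ m) e = (e.toMultiset.map (wS δ m)).sum := by
  induction e using Finsupp.induction with
  | zero => simp
  | single_add v n e hv hn ih =>
      rw [map_add, Finsupp.toMultiset_add, Multiset.map_add, Multiset.sum_add, ih]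
      congr 1
      rw [Finsupp.toMultiset_single, Multiset.nsmul_singleton, Multiset.map_replicate,
        Multiset.sum_replicate]
      rw [Finsupp.weight_apply, Finsupp.sum_single_index]
      simp

lemma length_sub_length (L : List (Fin δ ⊕ Fin m)) :
    ((L.filterMap Sum.getLeft?).length : ℤ) - (L.filterMap Sum.getRight?).length
      = (L.map (wS δ m)).sum := by
  induction L with
  | nil => simp
  | cons v L ih =>
      cases v with
      | inl a =>
          have h1 : Sum.getLeft? (inl a : Fin δ ⊕ Fin m) = some a := rfl
          have h2 : Sum.getRight? (inl a : Fin δ ⊕ Fin m) = none := rfl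
          simp only [List.filterMap_cons, h1, h2, List.map_cons, List.sum_cons,
            List.length_cons, ← ih]
          simp only [wS, Sum.elim_inl]
          push_cast
          ring
      | inr b =>
          have h1 : Sum.getLeft? (inr b : Fin δ ⊕ Fin m) = none := rfl
          have h2 : Sum.getRight? (inr b : Fin δ ⊕ Fin m) = some b := rfl
          simp only [List.filterMap_cons, h1, h2, List.map_cons, List.sum_cons,
            List.length_cons, ← ih]
          simp only [wS, Sum.elim_inr]
          push_cast
          ring

lemma lef_length_eq_rig_length {e : (Fin δ ⊕ Fin m) →₀ ℕ}
    (h : Finsupp.weight (wS δ m) e = 0) : (lef e).length = (rig e).length := by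
  have h1 := length_sub_length (δ := δ) (m := m) e.toMultiset.toList
  rw [← lef, ← rig] at h1
  have h2 : ((e.toMultiset.toList.map (wS δ m) : List ℤ) : Multiset ℤ).sum
      = (e.toMultiset.map (wS δ m)).sum := by
    rw [← Multiset.map_coe, Multiset.coe_toList]
  rw [Multiset.sum_coe] at h2
  rw [h2, ← weight_toMultiset, h] at h1
  omega

lemma phi_Mpre {e : (Fin δ ⊕ Fin m) →₀ ℕ}
    (h : (lef e).length = (rig e).length) :
    phi O δ m (Mpre O e) = monomial e (1 : O) := by
  rw [Mpre, Pl_eq_monomial, phi_monomial]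
  congr 1
  have hml : ((lef e).zip (rig e)).map Prod.fst = lef e :=
    List.map_fst_zip h.le
  have hmr : ((lef e).zip (rig e)).map Prod.snd = rig e :=
    List.map_snd_zip h.ge
  rw [Ee, Multiset.toFinsupp_toMultiset]
  have h1 : (Multiset.map (fun p => (inl p.1 : Fin δ ⊕ Fin m))
        (↑((lef e).zip (rig e)) : Multiset (Fin δ × Fin m)))
      = ↑(((lef e).map inl : List (Fin δ ⊕ Fin m))) := by
    rw [Multiset.map_coe]
    congr 1
    conv_rhs => rw [← hml]
    rw [List.map_map]
    rfl
  have h2 : (Multiset.map (fun p => (inr p.2 : Fin δ ⊕ Fin m))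
        (↑((lef e).zip (rig e)) : Multiset (Fin δ × Fin m)))
      = ↑(((rig e).map inr : List (Fin δ ⊕ Fin m))) := by
    rw [Multiset.map_coe]
    congr 1
    conv_rhs => rw [← hmr]
    rw [List.map_map]
    rfl
  rw [h1, h2, Multiset.coe_add]
  have h3 : (↑(((lef e).map inl : List (Fin δ ⊕ Fin m))
      ++ ((rig e).map inr : List (Fin δ ⊕ Fin m))) : Multiset (Fin δ ⊕ Fin m))
      = ↑e.toMultiset.toList := Multiset.coe_eq_coe.2 (split_perm _)
  rw [h3, Multiset.coe_toList, Finsupp.toMultiset_toFinsupp]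

lemma exists_phi_eq {t : MvPolynomial (Fin δ ⊕ Fin m) O}
    (ht : t.IsWeightedHomogeneous (wS δ m) 0) : ∃ u, phi O δ m u = t := by
  classical
  refine ⟨∑ e ∈ t.support, C (coeff e t) * Mpre O e, ?_⟩
  rw [map_sum]
  conv_rhs => rw [as_sum t]
  refine Finset.sum_congr rfl fun e he => ?_
  rw [map_mul]
  have hC : phi O δ m (C (coeff e t)) = C (coeff e t) := by
    simp [phi]
  rw [hC, phi_Mpre (lef_length_eq_rig_length (ht (mem_support_iff.1 he))),
    C_mul_monomial, mul_one]


/-! ### Homogeneity of the Segre image -/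

lemma phi_isWH (F : MvPolynomial (Fin δ × Fin m) O) :
    (phi O δ m F).IsWeightedHomogeneous (wS δ m) 0 := by
  induction F using MvPolynomial.induction_on with
  | C a =>
      have : phi O δ m (C a) = C a := by simp [phi]
      rw [this]
      exact isWeightedHomogeneous_C _ _
  | add p q hp hq => rw [map_add]; exact hp.add hq
  | mul_X p i hp =>
      rw [map_mul]
      have hXi : phi O δ m (X i) = X (inl i.1) * X (inr i.2) := by
        simp [phi]
      have hx : ((X (inl i.1) * X (inr i.2)) :
          MvPolynomial (Fin δ ⊕ Fin m) O).IsWeightedHomogeneous (wS δ m) 0 := by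
        have := (isWeightedHomogeneous_X (R := O) (wS δ m) (inl i.1)).mul
          (isWeightedHomogeneous_X (R := O) (wS δ m) (inr i.2))
        simpa [wS] using this
      have := hp.mul hx
      rw [hXi]
      simpa using this

lemma whc0_mul {f t : MvPolynomial (Fin δ ⊕ Fin m) O}
    (hf : f.IsWeightedHomogeneous (wS δ m) 0) :
    weightedHomogeneousComponent (wS δ m) 0 (f * t)
      = f * weightedHomogeneousComponent (wS δ m) 0 t := by
  classical
  ext e
  rw [coeff_weightedHomogeneousComponent, coeff_mul, coeff_mul]
  split_ifs with he
  · refine Finset.sum_congr rfl fun p hp => ?_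
    rw [coeff_weightedHomogeneousComponent]
    rcases eq_or_ne (coeff p.1 f) 0 with h0 | h0
    · rw [h0, zero_mul, zero_mul]
    · have hw1 : Finsupp.weight (wS δ m) p.1 = 0 := hf h0
      have hadd : p.1 + p.2 = e := Finset.HasAntidiagonal.mem_antidiagonal.1 hp
      have hw2 : Finsupp.weight (wS δ m) p.2 = 0 := by
        have h3 := congrArg (Finsupp.weight (wS δ m)) hadd
        rw [map_add, hw1, zero_add] at h3
        rw [h3, he]
      rw [if_pos hw2]
  · symm
    apply Finset.sum_eq_zero
    intro p hp
    rw [coeff_weightedHomogeneousComponent]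
    rcases eq_or_ne (coeff p.1 f) 0 with h0 | h0
    · rw [h0, zero_mul]
    · have hw1 : Finsupp.weight (wS δ m) p.1 = 0 := hf h0
      have hadd : p.1 + p.2 = e := Finset.HasAntidiagonal.mem_antidiagonal.1 hp
      have hne : Finsupp.weight (wS δ m) p.2 ≠ 0 := by
        intro hz
        apply he
        rw [← hadd, map_add, hw1, hz, add_zero]
      rw [if_neg hne, mul_zero]

lemma phi_minors_zero {F : MvPolynomial (Fin δ × Fin m) O} (hF : F ∈ minors2 O δ m) :
    phi O δ m F = 0 := by
  induction hF using Submodule.span_induction with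
  | mem f hf =>
      obtain ⟨i, i', j, j', rfl⟩ := hf
      simp only [map_sub, map_mul, phi, aeval_X]
      ring
  | zero => exact map_zero _
  | add a b _ _ ha hb => rw [map_add, ha, hb, add_zero]
  | smul a b _ hb => rw [smul_eq_mul, map_mul, hb, mul_zero]

/-- The main kernel characterization. -/
theorem mem_sup_iff (G F : MvPolynomial (Fin δ × Fin m) O) :
    F ∈ minors2 O δ m + Ideal.span {G}
      ↔ phi O δ m F ∈ Ideal.span {phi O δ m G} := by
  constructor
  · intro hF
    obtain ⟨a, ha, b, hb, rfl⟩ := Submodule.mem_sup.1 hF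
    rw [map_add, phi_minors_zero ha, zero_add]
    obtain ⟨t, rfl⟩ := Ideal.mem_span_singleton.1 hb
    rw [map_mul]
    exact Ideal.mem_span_singleton.2 (Dvd.intro _ rfl)
  · intro hF
    obtain ⟨t, ht⟩ := Ideal.mem_span_singleton.1 hF
    set t₀ := weightedHomogeneousComponent (wS δ m) 0 t with ht₀
    have h1 : phi O δ m F = phi O δ m G * t₀ := by
      calc phi O δ m F
          = weightedHomogeneousComponent (wS δ m) 0 (phi O δ m F) :=
            ((phi_isWH F).weightedHomogeneousComponent_same).symm
        _ = weightedHomogeneousComponent (wS δ m) 0 (phi O δ m G * t) := by rw [← ht]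
        _ = phi O δ m G * t₀ := whc0_mul (phi_isWH G)
    obtain ⟨u, hu⟩ := exists_phi_eq
      (weightedHomogeneousComponent_isWeightedHomogeneous 0 t)
    have h2 : phi O δ m (F - G * u) = 0 := by
      rw [map_sub, map_mul, hu, h1, sub_self]
    have h3 : F = (F - G * u) + G * u := by ring
    rw [h3]
    exact Submodule.add_mem_sup (mem_minors_of_phi_eq_zero h2)
      (Ideal.mem_span_singleton.2 (Dvd.intro _ rfl))


/-! ### Prime elements in polynomial rings -/

lemma prime_X_mv {R : Type*} [CommRing R] [IsDomain R] {σ : Type*} (v : σ) :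
    Prime (X v : MvPolynomial σ R) := by
  classical
  let e : MvPolynomial σ R ≃ₐ[R] Polynomial (MvPolynomial {b // b ≠ v} R) :=
    (renameEquiv R (Equiv.optionSubtypeNe v).symm).trans (optionEquivLeft R {b // b ≠ v})
  rw [← MulEquiv.prime_iff e]
  have h : e (X v) = Polynomial.X := by
    show (optionEquivLeft R {b // b ≠ v})
      ((renameEquiv R (Equiv.optionSubtypeNe v).symm) (X v)) = _
    rw [renameEquiv_apply, rename_X, Equiv.optionSubtypeNe_symm_self, optionEquivLeft_X_none]
  show Prime (e (X v))
  rw [h]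
  exact Polynomial.prime_X

lemma prime_C_mv {R : Type*} [CommRing R] [IsDomain R] {σ : Type*} {π : R} (hπ : Prime π) :
    Prime (C π : MvPolynomial σ R) := by
  have hne : (C π : MvPolynomial σ R) ≠ 0 := by
    simpa using hπ.ne_zero
  rw [← Ideal.span_singleton_prime hne]
  haveI : (Ideal.span {π}).IsPrime := (Ideal.span_singleton_prime hπ.ne_zero).2 hπ
  have hker : Ideal.span {(C π : MvPolynomial σ R)}
      = RingHom.ker (MvPolynomial.map (Ideal.Quotient.mk (Ideal.span {π})) :
          MvPolynomial σ R →+* MvPolynomial σ (R ⧸ Ideal.span {π})) := by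
    rw [MvPolynomial.ker_map, Ideal.mk_ker, Ideal.map_span, Set.image_singleton]
  rw [hker]
  exact RingHom.ker_isPrime _

/-! ### The quadratic forms -/

variable (O) in
def qxp (δ m : ℕ) : MvPolynomial (Fin δ ⊕ Fin m) O :=
  ∑ i : Fin δ, X (inl i) * X (inl i.rev)

variable (O) in
def qyp (δ m : ℕ) : MvPolynomial (Fin δ ⊕ Fin m) O :=
  ∑ j : Fin m, X (inr j) * X (inr j.rev)

lemma phi_T (π : O) : phi O δ m (Tpoly O δ m + C (4 * π))
    = qxp O δ m * qyp O δ m + C (4 * π) := by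
  rw [map_add]
  have hC : phi O δ m (C (4 * π)) = C (4 * π) := by simp [phi]
  rw [hC]
  congr 1
  rw [Tpoly, qxp, qyp, Finset.sum_mul_sum, map_sum]
  refine Finset.sum_congr rfl fun i _ => ?_
  rw [map_sum]
  refine Finset.sum_congr rfl fun j _ => ?_
  simp only [map_mul, phi, aeval_X]
  ring

/-! ### The variable-isolating equivalence -/

def e1 (δ n : ℕ) : (Fin δ ⊕ Fin (n + 2)) ≃ Option (Fin δ ⊕ Fin (n + 1)) where
  toFun := Sum.elim (fun i => some (inl i))
    (fun j => (_root_.finSuccEquiv (n + 1) j).map inr)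
  invFun o := o.elim (inr 0) (Sum.elim (fun i => inl i) (fun j => inr j.succ))
  left_inv v := by
    rcases v with i | j
    · rfl
    · induction j using Fin.cases with
      | zero => simp
      | succ k => simp
  right_inv o := by
    rcases o with _ | (i | j)
    · simp
    · rfl
    · simp

variable (O) in
def eps (δ n : ℕ) : MvPolynomial (Fin δ ⊕ Fin (n + 2)) O
    ≃ₐ[O] Polynomial (MvPolynomial (Fin δ ⊕ Fin (n + 1)) O) :=
  (renameEquiv O (e1 δ n)).trans (optionEquivLeft O (Fin δ ⊕ Fin (n + 1)))

variable {n : ℕ}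

lemma eps_X_inl (i : Fin δ) :
    eps O δ n (X (inl i)) = Polynomial.C (X (inl i)) := by
  show (optionEquivLeft O (Fin δ ⊕ Fin (n + 1)))
    ((renameEquiv O (e1 δ n)) (X (inl i))) = _
  rw [renameEquiv_apply, rename_X]
  have h : e1 δ n (inl i) = some (inl i) := rfl
  rw [h, optionEquivLeft_X_some]

lemma eps_X_inr_zero :
    eps O δ n (X (inr (0 : Fin (n + 2)))) = Polynomial.X := by
  show (optionEquivLeft O (Fin δ ⊕ Fin (n + 1)))
    ((renameEquiv O (e1 δ n)) (X (inr 0))) = _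
  rw [renameEquiv_apply, rename_X]
  have h : e1 δ n (inr (0 : Fin (n + 2))) = none := by
    show ((_root_.finSuccEquiv (n + 1)) (0 : Fin (n + 2))).map inr = none
    rw [finSuccEquiv_zero]
    rfl
  rw [h, optionEquivLeft_X_none]

lemma eps_X_inr_succ (j : Fin (n + 1)) :
    eps O δ n (X (inr j.succ)) = Polynomial.C (X (inr j)) := by
  show (optionEquivLeft O (Fin δ ⊕ Fin (n + 1)))
    ((renameEquiv O (e1 δ n)) (X (inr j.succ))) = _
  rw [renameEquiv_apply, rename_X]
  have h : e1 δ n (inr j.succ) = some (inr j) := by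
    show ((_root_.finSuccEquiv (n + 1)) j.succ).map inr = some (inr j)
    rw [finSuccEquiv_succ]
    rfl
  rw [h, optionEquivLeft_X_some]

lemma eps_C (a : O) : eps O δ n (C a) = Polynomial.C (C a) := by
  show (optionEquivLeft O (Fin δ ⊕ Fin (n + 1)))
    ((renameEquiv O (e1 δ n)) (C a)) = _
  rw [renameEquiv_apply, rename_C, optionEquivLeft_C]


/-! ### Primality of the image of `T' + 4π` -/

theorem span_prime {O : Type*} [CommRing O] [IsDomain O] [UniqueFactorizationMonoid O]
    (π : O) (hπ : Prime π) (h2 : IsUnit (2 : O)) (δ' n : ℕ) :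
    (Ideal.span {phi O (δ' + 1) (n + 2) (Tpoly O (δ' + 1) (n + 2) + C (4 * π))}).IsPrime := by
  classical
  set δ := δ' + 1 with hδdef
  have h4 : IsUnit (4 : O) := by
    have h := h2.mul h2
    rwa [show (2 : O) * 2 = 4 by norm_num] at h
  set ytop : MvPolynomial (Fin δ ⊕ Fin (n + 1)) O := X (inr (Fin.last n)) with hytop
  set qx' : MvPolynomial (Fin δ ⊕ Fin (n + 1)) O := qxp O δ (n + 1) with hqx'
  set fb : MvPolynomial (Fin δ ⊕ Fin (n + 2)) O :=
    phi O δ (n + 2) (Tpoly O δ (n + 2) + C (4 * π)) with hfbdef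
  have hfb : fb = qxp O δ (n + 2) * qyp O δ (n + 2) + C (4 * π) := phi_T π
  set F : Polynomial (MvPolynomial (Fin δ ⊕ Fin (n + 1)) O) := eps O δ n fb with hF
  -- image of qx
  have heps_qx : eps O δ n (qxp O δ (n + 2)) = Polynomial.C qx' := by
    rw [hqx', qxp, qxp, map_sum, map_sum]
    refine Finset.sum_congr rfl fun i _ => ?_
    rw [map_mul, eps_X_inl, eps_X_inl, ← map_mul]
  -- image of qy
  set eqy : Polynomial (MvPolynomial (Fin δ ⊕ Fin (n + 1)) O) :=
    eps O δ n (qyp O δ (n + 2)) with heqy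
  have heqy_sum : eqy = ∑ j : Fin (n + 2), eps O δ n (X (inr j) * X (inr j.rev)) := by
    rw [heqy, qyp, map_sum]
  have term0 : eps O δ n (X (inr (0 : Fin (n + 2))) * X (inr (Fin.rev 0)))
      = Polynomial.X * Polynomial.C ytop := by
    rw [map_mul, eps_X_inr_zero, Fin.rev_zero, ← Fin.succ_last, eps_X_inr_succ]
  have termlast : eps O δ n
      (X (inr (Fin.last (n + 1))) * X (inr (Fin.rev (Fin.last (n + 1)))))
      = Polynomial.C ytop * Polynomial.X := by
    rw [map_mul, Fin.rev_last, eps_X_inr_zero, ← Fin.succ_last, eps_X_inr_succ]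
  have termmid : ∀ j : Fin (n + 2), j ≠ 0 → j ≠ Fin.last (n + 1) →
      ∃ a, eps O δ n (X (inr j) * X (inr j.rev)) = Polynomial.C a := by
    intro j hj0 hjl
    obtain ⟨k, hk⟩ := Fin.exists_succ_eq.2 hj0
    have hrev : Fin.rev j ≠ 0 := by
      intro h
      apply hjl
      have h' := congrArg Fin.rev h
      rwa [Fin.rev_rev, Fin.rev_zero] at h'
    obtain ⟨k', hk'⟩ := Fin.exists_succ_eq.2 hrev
    refine ⟨X (inr k) * X (inr k'), ?_⟩
    rw [map_mul, ← hk', ← hk, eps_X_inr_succ, eps_X_inr_succ, map_mul]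
  have hlast0 : (Fin.last (n + 1) : Fin (n + 2)) ≠ 0 := by
    simp [Fin.ext_iff]
  have hc1y : eqy.coeff 1 = 2 * ytop := by
    rw [heqy_sum, Polynomial.finset_sum_coeff]
    rw [← Finset.sum_subset
      (Finset.subset_univ ({0, Fin.last (n + 1)} : Finset (Fin (n + 2)))) ?_]
    · rw [Finset.sum_pair (Ne.symm hlast0), term0, termlast]
      rw [mul_comm Polynomial.X (Polynomial.C ytop)]
      simp only [Polynomial.coeff_C_mul, Polynomial.coeff_X_one]
      ring
    · intro j _ hj
      simp only [Finset.mem_insert, Finset.mem_singleton, not_or] at hj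
      obtain ⟨a, ha⟩ := termmid j hj.1 hj.2
      rw [ha, Polynomial.coeff_C]
      simp
  have hdegy : eqy.natDegree ≤ 1 := by
    rw [heqy_sum]
    refine Polynomial.natDegree_sum_le_of_forall_le _ _ fun j _ => ?_
    rcases eq_or_ne j 0 with rfl | hj0
    · rw [term0]
      refine Polynomial.natDegree_mul_le.trans ?_
      simp [Polynomial.natDegree_X, Polynomial.natDegree_C]
    rcases eq_or_ne j (Fin.last (n + 1)) with rfl | hjl
    · rw [termlast]
      refine Polynomial.natDegree_mul_le.trans ?_
      simp [Polynomial.natDegree_X, Polynomial.natDegree_C]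
    · obtain ⟨a, ha⟩ := termmid j hj0 hjl
      rw [ha]
      simp [Polynomial.natDegree_C]
  have hFdecomp : F = Polynomial.C qx' * eqy + Polynomial.C (C (4 * π)) := by
    rw [hF, hfb, map_add, map_mul, heps_qx, eps_C, heqy]
  -- the evaluation point
  set pt : (Fin δ ⊕ Fin (n + 1)) → O :=
    Sum.elim (fun i => if i = 0 ∨ i = Fin.last δ' then 1 else 0) (fun _ => 0) with hpt
  have hqx'eval : eval pt qx' = 1 ∨ eval pt qx' = 2 := by
    rw [hqx', qxp, map_sum]
    have hterm : ∀ i : Fin δ,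
        eval pt (X (inl i) * X (inl i.rev)) = pt (inl i) * pt (inl i.rev) := by
      intro i
      rw [map_mul, eval_X, eval_X]
    rcases Nat.eq_zero_or_pos δ' with hδ0 | hδpos
    · left
      subst hδ0
      rw [Fin.sum_univ_one, hterm]
      have h0 : Fin.rev (0 : Fin 1) = 0 := rfl
      rw [h0]
      simp [hpt]
    · right
      have hne : (0 : Fin δ) ≠ Fin.last δ' := by
        intro h
        have h' := congrArg Fin.val h
        simp only [Fin.val_zero, Fin.val_last] at h'
        omega
      rw [← Finset.sum_subset
        (Finset.subset_univ ({0, Fin.last δ'} : Finset (Fin δ))) ?_]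
      · rw [Finset.sum_pair hne, hterm, hterm]
        have hr0 : Fin.rev (0 : Fin δ) = Fin.last δ' := Fin.rev_zero δ'
        have hrl : Fin.rev (Fin.last δ' : Fin δ) = 0 := Fin.rev_last δ'
        rw [hr0, hrl]
        have p0 : pt (inl (0 : Fin δ)) = 1 := by simp [hpt]
        have pl : pt (inl (Fin.last δ' : Fin δ)) = 1 := by simp [hpt]
        rw [p0, pl]
        norm_num
      · intro i _ hi
        simp only [Finset.mem_insert, Finset.mem_singleton, not_or] at hi
        rw [hterm]
        have : pt (inl i) = 0 := by
          simp only [hpt, Sum.elim_inl]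
          rw [if_neg (not_or.2 hi)]
        rw [this, zero_mul]
  have hqx'ne : qx' ≠ 0 := by
    intro h
    rw [h, map_zero] at hqx'eval
    rcases hqx'eval with h1 | h1
    · exact one_ne_zero h1.symm
    · exact h2.ne_zero (by
        have : (2 : O) = 0 := h1.symm
        exact this)
  have hπqx' : ¬ (C π ∣ qx') := by
    rintro ⟨w, hw⟩
    have hev := congrArg (eval pt) hw
    rw [map_mul, eval_C] at hev
    rcases hqx'eval with h1 | h1
    · have hu : π * eval pt w = 1 := by rw [← hev, h1]
      exact hπ.not_isUnit (IsUnit.of_mul_eq_one _ hu)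
    · have hu : π * eval pt w = 2 := by rw [← hev, h1]
      exact hπ.not_isUnit (isUnit_of_dvd_unit ⟨_, hu.symm⟩ h2)
  have hc1F : F.coeff 1 = qx' * (2 * ytop) := by
    rw [hFdecomp, Polynomial.coeff_add, Polynomial.coeff_C_mul, hc1y, Polynomial.coeff_C]
    simp
  have hc0F : F.coeff 0 = qx' * eqy.coeff 0 + C (4 * π) := by
    rw [hFdecomp, Polynomial.coeff_add, Polynomial.coeff_C_mul, Polynomial.coeff_C]
    simp
  have h2R : IsUnit (2 : MvPolynomial (Fin δ ⊕ Fin (n + 1)) O) := by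
    have h := h2.map (C : O →+* MvPolynomial (Fin δ ⊕ Fin (n + 1)) O)
    rwa [map_ofNat] at h
  have hytne : ytop ≠ 0 := hytop ▸ X_ne_zero _
  have hc1ne : F.coeff 1 ≠ 0 := by
    rw [hc1F]
    exact mul_ne_zero hqx'ne (mul_ne_zero h2R.ne_zero hytne)
  have hFdeg : F.natDegree = 1 := by
    refine le_antisymm ?_ (Polynomial.le_natDegree_of_ne_zero hc1ne)
    rw [hFdecomp]
    refine (Polynomial.natDegree_add_le _ _).trans ?_
    refine max_le (Polynomial.natDegree_mul_le.trans ?_) ?_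
    · simp only [Polynomial.natDegree_C, zero_add]
      exact hdegy
    · rw [Polynomial.natDegree_C]
      omega
  have hev0 : eval (fun _ => (0 : O)) (F.coeff 0) = 4 * π := by
    rw [hc0F, map_add, map_mul, eval_C]
    have hz : eval (fun _ => (0 : O)) qx' = 0 := by
      rw [hqx', qxp, map_sum]
      refine Finset.sum_eq_zero fun i _ => ?_
      rw [map_mul, eval_X]
      simp
    rw [hz, zero_mul, zero_add]
  have h4πne : (4 : O) * π ≠ 0 := mul_ne_zero h4.ne_zero hπ.ne_zero
  -- the divisor lemma
  have hdiv : ∀ r : MvPolynomial (Fin δ ⊕ Fin (n + 1)) O,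
      r ∣ F.coeff 1 → r ∣ F.coeff 0 → IsUnit r := by
    intro r h1d h0d
    by_contra hr
    have hrne : r ≠ 0 := by
      rintro rfl
      exact hc1ne (zero_dvd_iff.1 h1d)
    obtain ⟨t, hti, htd⟩ := WfDvdMonoid.exists_irreducible_factor hr hrne
    have htp : Prime t := UniqueFactorizationMonoid.irreducible_iff_prime.1 hti
    have ht1 : t ∣ qx' * (2 * ytop) := htd.trans (hc1F ▸ h1d)
    have ht0 : t ∣ F.coeff 0 := htd.trans h0d
    rcases htp.dvd_or_dvd ht1 with hta | htb
    · have htc : t ∣ C ((4 : O) * π) := by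
        have hsub : (C ((4 : O) * π) : MvPolynomial (Fin δ ⊕ Fin (n + 1)) O)
            = F.coeff 0 - qx' * eqy.coeff 0 := by
          rw [hc0F]; ring
        rw [hsub]
        exact dvd_sub ht0 (hta.mul_right _)
      have hct : t ∣ (C π : MvPolynomial (Fin δ ⊕ Fin (n + 1)) O) := by
        rw [map_mul] at htc
        rcases htp.dvd_or_dvd htc with h | h
        · exact absurd (isUnit_of_dvd_unit h (h4.map (C : O →+* _))) htp.not_isUnit
        · exact h
      have hassoc := htp.associated_of_dvd (prime_C_mv hπ) hct
      exact hπqx' (hassoc.symm.dvd.trans hta)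
    · rcases htp.dvd_or_dvd htb with h | h
      · exact absurd (isUnit_of_dvd_unit h h2R) htp.not_isUnit
      · have hassoc := htp.associated_of_dvd (prime_X_mv (inr (Fin.last n))) h
        have hdvd : ytop ∣ F.coeff 0 := hassoc.symm.dvd.trans ht0
        obtain ⟨w, hw⟩ := hdvd
        have hevw := congrArg (eval (fun _ => (0 : O))) hw
        rw [hev0, map_mul, hytop, eval_X] at hevw
        simp only [zero_mul] at hevw
        exact h4πne hevw
  -- irreducibility of F
  have hFne : F ≠ 0 := fun h => hc1ne (by rw [h, Polynomial.coeff_zero])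
  have hFirr : Irreducible F := by
    constructor
    · intro hu
      have := Polynomial.natDegree_eq_zero_of_isUnit hu
      omega
    · intro G H hGH
      have hG0 : G ≠ 0 := by rintro rfl; exact hFne (by rw [hGH, zero_mul])
      have hH0 : H ≠ 0 := by rintro rfl; exact hFne (by rw [hGH, mul_zero])
      have hdeg2 : G.natDegree + H.natDegree = 1 := by
        rw [← Polynomial.natDegree_mul hG0 hH0, ← hGH, hFdeg]
      rcases Nat.eq_zero_or_pos G.natDegree with hGd | hGd
      · left
        have hGC : G = Polynomial.C (G.coeff 0) :=
          Polynomial.eq_C_of_natDegree_eq_zero hGd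
        have hr1 : G.coeff 0 ∣ F.coeff 1 := by
          have he : F.coeff 1 = G.coeff 0 * H.coeff 1 := by
            conv_lhs => rw [hGH, hGC]
            rw [Polynomial.coeff_C_mul]
          rw [he]
          exact dvd_mul_right _ _
        have hr0 : G.coeff 0 ∣ F.coeff 0 := by
          have he : F.coeff 0 = G.coeff 0 * H.coeff 0 := by
            conv_lhs => rw [hGH, hGC]
            rw [Polynomial.coeff_C_mul]
          rw [he]
          exact dvd_mul_right _ _
        rw [hGC]
        exact Polynomial.isUnit_C.2 (hdiv _ hr1 hr0)
      · right
        have hHd : H.natDegree = 0 := by omega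
        have hHC : H = Polynomial.C (H.coeff 0) :=
          Polynomial.eq_C_of_natDegree_eq_zero hHd
        have hr1 : H.coeff 0 ∣ F.coeff 1 := by
          have he : F.coeff 1 = H.coeff 0 * G.coeff 1 := by
            conv_lhs => rw [hGH, mul_comm, hHC]
            rw [Polynomial.coeff_C_mul]
          rw [he]
          exact dvd_mul_right _ _
        have hr0 : H.coeff 0 ∣ F.coeff 0 := by
          have he : F.coeff 0 = H.coeff 0 * G.coeff 0 := by
            conv_lhs => rw [hGH, mul_comm, hHC]
            rw [Polynomial.coeff_C_mul]
          rw [he]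
          exact dvd_mul_right _ _
        rw [hHC]
        exact Polynomial.isUnit_C.2 (hdiv _ hr1 hr0)
  have hFprime : Prime F := UniqueFactorizationMonoid.irreducible_iff_prime.1 hFirr
  haveI hFspan : (Ideal.span {F}).IsPrime :=
    (Ideal.span_singleton_prime hFne).2 hFprime
  have hcomap : Ideal.span {fb}
      = Ideal.comap ((eps O δ n).toAlgHom.toRingHom) (Ideal.span {F}) := by
    ext x
    rw [Ideal.mem_comap, Ideal.mem_span_singleton, Ideal.mem_span_singleton]
    constructor
    · rintro ⟨c, rfl⟩
      refine ⟨eps O δ n c, ?_⟩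
      show eps O δ n (fb * c) = F * eps O δ n c
      rw [hF, ← map_mul]
    · intro h
      have hx : (eps O δ n).toAlgHom.toRingHom x = eps O δ n x := rfl
      rw [hx] at h
      have h' := map_dvd (eps O δ n).symm h
      have hsym : (eps O δ n).symm F = fb := by rw [hF, AlgEquiv.symm_apply_apply]
      rw [hsym, AlgEquiv.symm_apply_apply] at h'
      exact h'
  rw [show Ideal.span {phi O (δ' + 1) (n + 2) (Tpoly O (δ' + 1) (n + 2) + C (4 * π))}
    = Ideal.span {fb} from rfl, hcomap]
  exact Ideal.IsPrime.comap _


/-! ### Assembly -/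

theorem aux_domain {O : Type*} [CommRing O] [IsDomain O] [UniqueFactorizationMonoid O]
    (π : O) (hπ : Prime π) (h2 : IsUnit (2 : O)) (δ' n : ℕ) :
    IsDomain (MvPolynomial (Fin (δ' + 1) × Fin (n + 2)) O ⧸
      (minors2 O (δ' + 1) (n + 2) + Ideal.span {Tpoly O (δ' + 1) (n + 2) + C (4 * π)})) := by
  set G : MvPolynomial (Fin (δ' + 1) × Fin (n + 2)) O :=
    Tpoly O (δ' + 1) (n + 2) + C (4 * π) with hG
  haveI hsp : (Ideal.span {phi O (δ' + 1) (n + 2) G}).IsPrime := span_prime π hπ h2 δ' n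
  set ψ : MvPolynomial (Fin (δ' + 1) × Fin (n + 2)) O →+*
      (MvPolynomial (Fin (δ' + 1) ⊕ Fin (n + 2)) O ⧸
        Ideal.span {phi O (δ' + 1) (n + 2) G}) :=
    (Ideal.Quotient.mk _).comp (phi O (δ' + 1) (n + 2)).toRingHom with hψ
  have hker : RingHom.ker ψ
      = minors2 O (δ' + 1) (n + 2) + Ideal.span {G} := by
    ext F
    rw [RingHom.mem_ker, hψ, RingHom.comp_apply, Ideal.Quotient.eq_zero_iff_mem]
    exact (mem_sup_iff G F).symm
  haveI : (minors2 O (δ' + 1) (n + 2) + Ideal.span {G}).IsPrime := by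
    rw [← hker]
    exact RingHom.ker_isPrime ψ
  exact Ideal.Quotient.isDomain _

end Stmt3

/-- `A = O[z_{ij}]/(I₂(Z) + (T'(Z) + 4π))` is an integral domain. -/
theorem stmt_3 (O : Type*) [CommRing O] [IsDomain O] [IsDiscreteValuationRing O]
    [IsAdicComplete (IsLocalRing.maximalIdeal O) O]
    (p : ℕ) [Fact p.Prime] (hp : p ≠ 2)
    [IsAlgClosed (IsLocalRing.ResidueField O)] [CharP (IsLocalRing.ResidueField O) p]
    (π : O) (hπ : Irreducible π)
    (d δ : ℕ) (hd : 5 ≤ d) (hδ1 : 1 ≤ δ) (hδ2 : δ ≤ d - δ) :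
    IsDomain (MvPolynomial (Fin δ × Fin (d - δ)) O ⧸
      (minors2 O δ (d - δ) + Ideal.span {Tpoly O δ (d - δ) + C (4 * π)})) := by
  have hπp : Prime π := UniqueFactorizationMonoid.irreducible_iff_prime.1 hπ
  -- 2 is a unit in O
  have h2 : IsUnit (2 : O) := by
    have h2k : (2 : IsLocalRing.ResidueField O) ≠ 0 := by
      intro h
      have hcast : ((2 : ℕ) : IsLocalRing.ResidueField O) = 0 := by
        push_cast
        exact h
      have hdvd := (CharP.cast_eq_zero_iff (IsLocalRing.ResidueField O) p 2).1 hcast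
      have hple := Nat.le_of_dvd (by norm_num) hdvd
      have hge := (Fact.out : p.Prime).two_le
      interval_cases p
      · exact hp rfl
    by_contra hnu
    have hmem : (2 : O) ∈ IsLocalRing.maximalIdeal O := by
      rw [IsLocalRing.mem_maximalIdeal]
      exact hnu
    apply h2k
    have : IsLocalRing.residue O 2 = 0 := Ideal.Quotient.eq_zero_iff_mem.2 hmem
    rwa [map_ofNat] at this
  obtain ⟨δ', rfl⟩ : ∃ δ', δ = δ' + 1 := ⟨δ - 1, by omega⟩
  have hm2 : 2 ≤ d - (δ' + 1) := by omega
  obtain ⟨n, hn⟩ : ∃ n, d - (δ' + 1) = n + 2 := ⟨d - (δ' + 1) - 2, by omega⟩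
  rw [hn]
  exact Stmt3.aux_domain π hπp h2 δ' n
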